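/- arXiv:2409.20518 — 5 statements merged into one kernel-verified Lean document; each statement's English description precedes it below -/
import Mathlib

section
/- Let S ⊆ [ℕ]^∞ be a 𝔡-unbounded set. Then the subspace S ∪ Fin of the Cantor space 𝒫(ℕ) is Menger, but it is not σ-compact (it is not a countable union of compact subsets). -/
/-
Menger: finite selections from the covers `𝒰 n` cover any Lindelöf set `Y` with `|Y| < 𝔡`,
because the functions `n ↦ (index of a member of 𝒰 n containing y)`, `y ∈ Y`, are fewer than `𝔡`,
so some single `g` exceeds each of them somewhere. Cover the countable set `Fin` this way by
an open `U`; then `Uᶜ` is a compact subset of `[ℕ]^∞`, hence pointwise bounded, so fewer than `𝔡`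
points of `S` lie outside `U`, and they are covered the same way.

Not σ-compact: for compact `K ⊆ S ∪ Fin`, the set `K \ Fin` is `Gδ`, hence Polish. If it were
uncountable it would contain a Cantor set, a compact and hence bounded subset of `S` of size
`𝔠 ≥ 𝔡`. So `S` would be countable, while `|S| ≥ 𝔡 > ℵ₀`.
-/

open Set Filter Cardinal

namespace OmissionOfIntervals

/-- The Cantor space `𝒫(ℕ)`, identified with `ℕ → Bool` via characteristic functions,
with the product topology. -/
abbrev CantorSp : Type := ℕ → Bool

/-- `Fin`: the points of the Cantor space coding finite subsets of `ℕ`. -/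
def CFin : Set CantorSp := {x | {n | x n = true}.Finite}

/-- `[ℕ]^∞`: the points of the Cantor space coding infinite subsets of `ℕ`. -/
def CInf : Set CantorSp := {x | {n | x n = true}.Infinite}

/-- Increasing enumeration of the subset of `ℕ` coded by `x`. -/
noncomputable def enum (x : CantorSp) : ℕ → ℕ := Nat.nth (fun n => x n = true)

/-- `f ≤* g`: `f n ≤ g n` for all but finitely many `n`. -/
def LeStar (f g : ℕ → ℕ) : Prop := ∀ᶠ n in atTop, f n ≤ g n

/-- `a ⊆* b`: the set coded by `a` is almost contained in the set coded by `b`. -/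
def SubStar (a b : CantorSp) : Prop := {n | a n = true ∧ ¬ b n = true}.Finite

/-- A dominating family in the Baire space. -/
def Dominating (S : Set (ℕ → ℕ)) : Prop := ∀ f : ℕ → ℕ, ∃ s ∈ S, LeStar f s

/-- An unbounded (with respect to `≤*`) family in the Baire space. -/
def UnboundedFam (S : Set (ℕ → ℕ)) : Prop := ¬ ∃ g : ℕ → ℕ, ∀ s ∈ S, LeStar s g

/-- The dominating number `𝔡`. -/
noncomputable def frd : Cardinal := sInf {c | ∃ S : Set (ℕ → ℕ), Dominating S ∧ #S = c}

/-- The bounding number `𝔟`. -/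
noncomputable def frb : Cardinal := sInf {c | ∃ S : Set (ℕ → ℕ), UnboundedFam S ∧ #S = c}

/-- A centered family of infinite subsets of `ℕ`: every finite subfamily has infinite
intersection. -/
def Centered (S : Set CantorSp) : Prop :=
  S ⊆ CInf ∧ ∀ F : Finset CantorSp, ↑F ⊆ S → {n | ∀ x ∈ F, x n = true}.Infinite

/-- `S` has a pseudointersection: an infinite set almost contained in every member of `S`. -/
def HasPseudointersection (S : Set CantorSp) : Prop := ∃ a ∈ CInf, ∀ s ∈ S, SubStar a s

/-- The pseudointersection number `𝔭`. -/
noncomputable def frp : Cardinal :=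
  sInf {c | ∃ S : Set CantorSp, Centered S ∧ ¬ HasPseudointersection S ∧ #S = c}

/-- `S ⊆ [ℕ]^∞` is `κ`-unbounded: `|S| ≥ κ` and for every `b : ℕ → ℕ` only `< κ` many
members of `S` satisfy `s(n) ≤ b(n)` for all `n` (via increasing enumerations). -/
def KappaUnbounded (κ : Cardinal) (S : Set CantorSp) : Prop :=
  κ ≤ #S ∧ ∀ b : ℕ → ℕ, #{s ∈ S | ∀ n, enum s n ≤ b n} < κ

/-- `X` is `κ`-concentrated on `CFin`: `|X| ≥ κ` and `|X ∖ U| < κ` for every open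
`U ⊇ CFin`. -/
def KappaConcentrated (κ : Cardinal) (X : Set CantorSp) : Prop :=
  κ ≤ #X ∧ ∀ U : Set CantorSp, IsOpen U → CFin ⊆ U → #(X \ U : Set CantorSp) < κ

/-- An open cover of the space `X`. -/
def IsOpenCover {X : Type*} [TopologicalSpace X] (𝒰 : Set (Set X)) : Prop :=
  (∀ U ∈ 𝒰, IsOpen U) ∧ ⋃₀ 𝒰 = Set.univ

/-- A point-cofinite (γ-) open cover of the space `X`: an infinite family of open sets such
that every point belongs to all but finitely many members. -/
def PointCofiniteCover {X : Type*} [TopologicalSpace X] (𝒰 : Set (Set X)) : Prop :=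
  (∀ U ∈ 𝒰, IsOpen U) ∧ 𝒰.Infinite ∧ ∀ x : X, {U ∈ 𝒰 | x ∉ U}.Finite

/-- An ω-cover of the space `X`: no member contains all of `X`, and every finite subset of
`X` is contained in some member. -/
def OmegaCover {X : Type*} [TopologicalSpace X] (𝒰 : Set (Set X)) : Prop :=
  (∀ U ∈ 𝒰, IsOpen U) ∧ (∀ U ∈ 𝒰, U ≠ Set.univ) ∧ ∀ F : Finset X, ∃ U ∈ 𝒰, ↑F ⊆ U

/-- An ω-cover of the subset `Y` by open subsets of the ambient space `X`. -/
def OmegaCoverOf {X : Type*} [TopologicalSpace X] (𝒰 : Set (Set X)) (Y : Set X) : Prop :=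
  (∀ U ∈ 𝒰, IsOpen U) ∧ (∀ U ∈ 𝒰, ¬ Y ⊆ U) ∧ ∀ F : Finset X, ↑F ⊆ Y → ∃ U ∈ 𝒰, ↑F ⊆ U

/-- The Menger property. -/
def Menger (X : Type*) [TopologicalSpace X] : Prop :=
  ∀ 𝒰 : ℕ → Set (Set X), (∀ n, IsOpenCover (𝒰 n)) →
    ∃ 𝓕 : ℕ → Set (Set X), (∀ n, 𝓕 n ⊆ 𝒰 n ∧ (𝓕 n).Finite) ∧ ⋃₀ (⋃ n, 𝓕 n) = Set.univ

/-- The Hurewicz property. -/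
def Hurewicz (X : Type*) [TopologicalSpace X] : Prop :=
  ∀ 𝒰 : ℕ → Set (Set X), (∀ n, IsOpenCover (𝒰 n)) →
    (∀ n, ¬ ∃ 𝓕 ⊆ 𝒰 n, 𝓕.Finite ∧ ⋃₀ 𝓕 = Set.univ) →
    ∃ 𝓕 : ℕ → Set (Set X), (∀ n, 𝓕 n ⊆ 𝒰 n ∧ (𝓕 n).Finite) ∧
      ∀ x : X, ∀ᶠ n in atTop, x ∈ ⋃₀ 𝓕 n

/-- The property `S1(Γ,Γ)`. -/
def S1GammaGamma (X : Type*) [TopologicalSpace X] : Prop :=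
  ∀ 𝒰 : ℕ → Set (Set X), (∀ n, PointCofiniteCover (𝒰 n)) →
    ∃ U : ℕ → Set X, (∀ n, U n ∈ 𝒰 n) ∧ ∀ x : X, ∀ᶠ n in atTop, x ∈ U n

/-- The property `S1(Γ,O)`. -/
def S1GammaO (X : Type*) [TopologicalSpace X] : Prop :=
  ∀ 𝒰 : ℕ → Set (Set X), (∀ n, PointCofiniteCover (𝒰 n)) →
    ∃ U : ℕ → Set X, (∀ n, U n ∈ 𝒰 n) ∧ (⋃ n, U n) = Set.univ

/-- The property `S1(Ω,Γ)`. -/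
def S1OmegaGamma (X : Type*) [TopologicalSpace X] : Prop :=
  ∀ 𝒰 : ℕ → Set (Set X), (∀ n, OmegaCover (𝒰 n)) →
    ∃ U : ℕ → Set X, (∀ n, U n ∈ 𝒰 n) ∧ ∀ x : X, ∀ᶠ n in atTop, x ∈ U n

/-- `X` is an ω-γ set: every open ω-cover has a subfamily that is a point-cofinite cover. -/
def OmegaGammaSet (X : Type*) [TopologicalSpace X] : Prop :=
  ∀ 𝒰 : Set (Set X), OmegaCover 𝒰 → ∃ 𝒱 ⊆ 𝒰, PointCofiniteCover 𝒱

/-- The property `U_k(Γ,Γ)`. -/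
def UkGammaGamma (k : ℕ) (X : Type*) [TopologicalSpace X] : Prop :=
  ∀ 𝒰 : ℕ → Set (Set X), (∀ n, PointCofiniteCover (𝒰 n)) →
    (∀ n, ¬ ∃ 𝓕 : Finset (Set X), ↑𝓕 ⊆ 𝒰 n ∧ 𝓕.card ≤ k ∧ ⋃₀ (↑𝓕 : Set (Set X)) = Set.univ) →
    ∃ 𝓕 : ℕ → Finset (Set X), (∀ n, ↑(𝓕 n) ⊆ 𝒰 n ∧ (𝓕 n).card ≤ k) ∧
      ∀ x : X, ∀ᶠ n in atTop, x ∈ ⋃₀ ((𝓕 n : Finset (Set X)) : Set (Set X))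

/-- The property `U_id(Γ,Γ)`. -/
def UidGammaGamma (X : Type*) [TopologicalSpace X] : Prop :=
  ∀ 𝒰 : ℕ → Set (Set X), (∀ n, PointCofiniteCover (𝒰 n)) →
    (∀ n, ¬ ∃ 𝓕 : Finset (Set X), ↑𝓕 ⊆ 𝒰 n ∧ ⋃₀ (↑𝓕 : Set (Set X)) = Set.univ) →
    ∃ 𝓕 : ℕ → Finset (Set X), (∀ n, ↑(𝓕 n) ⊆ 𝒰 n ∧ (𝓕 n).card ≤ n) ∧
      ∀ x : X, ∀ᶠ n in atTop, x ∈ ⋃₀ ((𝓕 n : Finset (Set X)) : Set (Set X))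

/-- The set of terms of an ordinal-indexed sequence, below the ordinal `o`. -/
def rangeBelow (s : Ordinal → CantorSp) (o : Ordinal) : Set CantorSp := {x | ∃ α < o, x = s α}

/-- `s`, restricted to ordinals below `frb.ord`, is a `𝔟`-scale: an unbounded,
`≤*`-increasing `𝔟`-sequence of infinite subsets of `ℕ`. -/
def IsBScale (s : Ordinal → CantorSp) : Prop :=
  (∀ α < frb.ord, s α ∈ CInf) ∧
  UnboundedFam {f | ∃ α < frb.ord, f = enum (s α)} ∧
  ∀ α β : Ordinal, α < β → β < frb.ord → LeStar (enum (s α)) (enum (s β))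

/-- `t`, restricted to ordinals below `κ.ord`, is a `κ`-tower:
`⊆*`-decreasing sequence of infinite subsets of `ℕ`. -/
def IsTower (κ : Cardinal) (t : Ordinal → CantorSp) : Prop :=
  (∀ α < κ.ord, t α ∈ CInf) ∧
  ∀ α β : Ordinal, α < β → β < κ.ord → SubStar (t β) (t α)

/-- An unbounded `κ`-tower. -/
def IsUnboundedTower (κ : Cardinal) (t : Ordinal → CantorSp) : Prop :=
  IsTower κ t ∧ UnboundedFam {f | ∃ α < κ.ord, f = enum (t α)}

/-- `a ⊑ b`: for all but finitely many `n`, the interval `[b(n), b(n+1)]` contains at least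
two elements of the set coded by `a`. -/
def SqSubset (a b : CantorSp) : Prop :=
  ∀ᶠ n in atTop,
    2 ≤ ((Finset.Icc (enum b n) (enum b (n + 1))).filter (fun k => a k = true)).card

/-- `s`, restricted to ordinals below `frb.ord`, is a `𝔟(⊑)`-scale. -/
def IsBSqScale (s : Ordinal → CantorSp) : Prop :=
  (∀ α < frb.ord, s α ∈ CInf) ∧
  UnboundedFam {f | ∃ α < frb.ord, f = enum (s α)} ∧
  ∀ α β : Ordinal, α < β → β < frb.ord → SqSubset (s α) (s β)


theorem Dominating.not_countable {D : Set (ℕ → ℕ)} (hD : Dominating D) : ¬ D.Countable := by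
  intro hc
  obtain ⟨d, rfl⟩ := hc.exists_eq_range ⟨_, (hD 0).choose_spec.1⟩
  obtain ⟨_, ⟨i, rfl⟩, hle⟩ := hD fun n => ∑ j ∈ Finset.range (n + 1), d j n + 1
  obtain ⟨n, hn, hin⟩ := (hle.and (eventually_ge_atTop i)).exists
  have : d i n ≤ ∑ j ∈ Finset.range (n + 1), d j n :=
    Finset.single_le_sum (f := (d · n)) (fun j _ => Nat.zero_le _)
      (Finset.mem_range.mpr (Nat.lt_succ_of_le hin))
  dsimp only at hn
  omega

theorem dominating_univ : Dominating univ := fun f => ⟨f, trivial, .of_forall fun _ => le_rfl⟩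

theorem frd_le_mk_of_dominating {D : Set (ℕ → ℕ)} (hD : Dominating D) : frd ≤ #D :=
  csInf_le' ⟨D, hD, rfl⟩

theorem exists_dominating_mk_eq_frd : ∃ D : Set (ℕ → ℕ), Dominating D ∧ #D = frd :=
  csInf_mem (s := {c | ∃ D : Set (ℕ → ℕ), Dominating D ∧ #D = c})
    ⟨_, univ, dominating_univ, rfl⟩

theorem aleph0_lt_frd : ℵ₀ < frd := by
  obtain ⟨D, hD, hDd⟩ := exists_dominating_mk_eq_frd
  rw [← hDd, ← not_le, Cardinal.mk_le_aleph0_iff]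
  exact hD.not_countable

theorem frd_le_continuum : frd ≤ 𝔠 := by
  refine (frd_le_mk_of_dominating dominating_univ).trans_eq ?_
  rw [Cardinal.mk_univ, ← Cardinal.power_def, Cardinal.mk_nat, Cardinal.aleph0_power_aleph0]

theorem exists_forall_exists_lt_of_mk_lt_frd {ι : Type} (f : ι → ℕ → ℕ) (hι : #ι < frd) :
    ∃ g : ℕ → ℕ, ∀ i, ∃ n, f i n < g n := by
  by_contra! h
  have hD : Dominating (range f) := fun g => by
    obtain ⟨i, hi⟩ := h g
    exact ⟨f i, mem_range_self i, .of_forall hi⟩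
  exact (frd_le_mk_of_dominating hD).not_gt (Cardinal.mk_range_le.trans_lt hι)

theorem exists_finite_subfamilies_cover_of_mk_lt_frd {X : Type} [TopologicalSpace X]
    {𝒰 : ℕ → Set (Set X)} (h𝒰 : ∀ n, IsOpenCover (𝒰 n)) {Y : Set X} (hY : IsLindelof Y)
    (hYd : #Y < frd) :
    ∃ 𝓕 : ℕ → Set (Set X), (∀ n, 𝓕 n ⊆ 𝒰 n ∧ (𝓕 n).Finite) ∧ Y ⊆ ⋃₀ ⋃ n, 𝓕 n := by
  have hsub : ∀ n, ∃ 𝒞 ⊆ 𝒰 n, 𝒞.Countable ∧ Y ⊆ ⋃ V ∈ 𝒞, V := fun n =>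
    hY.elim_countable_subcover_image (fun V hV => (h𝒰 n).1 V hV)
      (by simp [← sUnion_eq_biUnion, (h𝒰 n).2])
  choose 𝒞 h𝒞𝒰 h𝒞 hY𝒞 using hsub
  have hcode : ∀ n, ∃ c : 𝒞 n → ℕ, Function.Injective c := fun n =>
    (h𝒞 n).to_subtype.exists_injective_nat
  choose c hc using hcode
  have hmem : ∀ (y : Y) n, ∃ V : 𝒞 n, (y : X) ∈ (V : Set X) := fun y n => by
    simpa using hY𝒞 n y.2
  choose V hV using hmem
  obtain ⟨g, hg⟩ := exists_forall_exists_lt_of_mk_lt_frd (fun y n => c n (V y n)) hYd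
  refine ⟨fun n => Subtype.val '' {W : 𝒞 n | c n W < g n}, fun n => ⟨?_, ?_⟩, ?_⟩
  · rintro _ ⟨W, -, rfl⟩
    exact h𝒞𝒰 n W.2
  · exact ((finite_Iio (g n)).preimage (hc n).injOn).image _
  · intro y hy
    obtain ⟨n, hn⟩ := hg ⟨y, hy⟩
    exact mem_sUnion.mpr ⟨_, mem_iUnion.mpr ⟨n, ⟨_, hn, rfl⟩⟩, hV ⟨y, hy⟩ n⟩

theorem menger_of_forall_isOpen_mk_compl_lt_frd {X : Type} [TopologicalSpace X]
    [LindelofSpace X] {A : Set X} (hA : A.Countable)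
    (hcompl : ∀ U : Set X, IsOpen U → A ⊆ U → #(Uᶜ : Set X) < frd) : Menger X := by
  intro 𝒰 h𝒰
  obtain ⟨𝓕, h𝓕, hA𝓕⟩ := exists_finite_subfamilies_cover_of_mk_lt_frd h𝒰 hA.isLindelof
    ((Cardinal.mk_le_aleph0_iff.mpr hA.to_subtype).trans_lt aleph0_lt_frd)
  have hU : IsOpen (⋃₀ ⋃ n, 𝓕 n) := isOpen_sUnion fun V hV => by
    obtain ⟨n, hn⟩ := mem_iUnion.mp hV
    exact (h𝒰 n).1 V ((h𝓕 n).1 hn)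
  obtain ⟨𝓖, h𝓖, hU𝓖⟩ := exists_finite_subfamilies_cover_of_mk_lt_frd h𝒰
    hU.isClosed_compl.isLindelof (hcompl _ hU hA𝓕)
  refine ⟨fun n => 𝓕 n ∪ 𝓖 n,
    fun n => ⟨union_subset (h𝓕 n).1 (h𝓖 n).1, (h𝓕 n).2.union (h𝓖 n).2⟩,
    eq_univ_of_forall fun x => ?_⟩
  by_cases hx : x ∈ ⋃₀ ⋃ n, 𝓕 n
  · exact sUnion_mono (iUnion_mono fun n => subset_union_left) hx
  · exact sUnion_mono (iUnion_mono fun n => subset_union_right) (hU𝓖 hx)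

theorem _root_.IsGδ.polishSpace {α : Type*} [TopologicalSpace α] [PolishSpace α] {s : Set α}
    (hs : IsGδ s) : PolishSpace s := by
  obtain ⟨U, hU, rfl⟩ := isGδ_iff_eq_iInter_nat.mp hs
  have : ∀ n, PolishSpace (U n) := fun n => (hU n).polishSpace
  -- `⋂ n, U n` is the diagonal of the Polish space `∀ n, U n`
  let φ : (⋂ n, U n : Set α) → ∀ n, U n := fun x n => ⟨x, mem_iInter.mp x.2 n⟩
  have hφ : Continuous φ := continuous_pi fun n => continuous_subtype_val.subtype_mk _
  have hemb : Topology.IsEmbedding φ :=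
    .of_comp hφ ((continuous_subtype_val.comp (continuous_apply 0)) :
      Continuous fun p : ∀ n, U n => ((p 0 : U 0) : α)) Topology.IsEmbedding.subtypeVal
  have hrange : range φ = ⋂ n, {p | ((p n : U n) : α) = p 0} := by
    ext p
    simp only [mem_range, mem_iInter, mem_ofPred_eq]
    refine ⟨?_, fun h => ⟨⟨p 0, mem_iInter.mpr fun n => h n ▸ (p n).2⟩, ?_⟩⟩
    · rintro ⟨x, rfl⟩ n
      rfl
    · funext n
      exact Subtype.ext (h n).symm
  refine Topology.IsClosedEmbedding.polishSpace (f := φ) ⟨hemb, ?_⟩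
  rw [hrange]
  exact isClosed_iInter fun n => isClosed_eq (continuous_subtype_val.comp (continuous_apply n))
    (continuous_subtype_val.comp (continuous_apply 0))

instance : PolishSpace CantorSp := {}

theorem countable_cfin : CFin.Countable := by
  have hinj : Function.Injective fun x : CantorSp => {n | x n = true} := fun x y h =>
    funext fun n => Bool.eq_iff_iff.mpr (Set.ext_iff.mp h n)
  simpa [CFin] using (countable_ofPred_finite_subset countable_univ).preimage hinj

theorem continuous_count (m : ℕ) : Continuous fun x : CantorSp => Nat.count (x · = true) m := by
  induction m with
  | zero => simp only [Nat.count_zero]; exact continuous_const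
  | succ m ih =>
    simp only [Nat.count_succ]
    exact ih.add <| (continuous_of_discreteTopology
      (f := fun b : Bool => if b = true then 1 else 0)).comp (continuous_apply m)

theorem exists_enum_le_of_isCompact {C : Set CantorSp} (hC : IsCompact C) (hCI : C ⊆ CInf) :
    ∃ b : ℕ → ℕ, ∀ x ∈ C, ∀ k, enum x k ≤ b k := by
  have hbound : ∀ k, ∃ m, C ⊆ {x | k < Nat.count (x · = true) m} := fun k =>
    hC.elim_directed_cover _ (fun m => isOpen_lt continuous_const (continuous_count m))
      (fun x hx => mem_iUnion.mpr ⟨enum x k + 1, by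
        simp [enum, Nat.count_nth_succ_of_infinite (hCI hx)]⟩)
      (Monotone.directed_le fun _ _ h _ hx => hx.trans_le (Nat.count_monotone _ h))
  choose b hb using hbound
  exact ⟨b, fun x hx k => (Nat.nth_lt_of_lt_count (hb k hx)).le⟩

theorem countable_diff_cfin_of_isCompact {S K : Set CantorSp}
    (hS : ∀ b : ℕ → ℕ, #{s ∈ S | ∀ n, enum s n ≤ b n} < frd) (hK : IsCompact K)
    (hKS : K ⊆ S ∪ CFin) : (K \ CFin).Countable := by
  by_contra hunc
  have : PolishSpace ↥(K \ CFin) :=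
    (hK.isClosed.isGδ.inter countable_cfin.isGδ_compl).polishSpace
  obtain ⟨f, -, hfc, hfi⟩ := isClosed_univ.exists_nat_bool_injection_of_not_countable
    (α := ↥(K \ CFin)) (by rwa [← countable_coe_iff, (Equiv.Set.univ _).countable_iff,
      countable_coe_iff])
  have hrange : range (Subtype.val ∘ f) ⊆ K \ CFin := by
    rintro _ ⟨y, rfl⟩
    exact (f y).2
  obtain ⟨b, hb⟩ := exists_enum_le_of_isCompact
    (isCompact_range (continuous_subtype_val.comp hfc)) fun x hx => (hrange hx).2
  have hbS : range (Subtype.val ∘ f) ⊆ {s ∈ S | ∀ n, enum s n ≤ b n} := fun x hx =>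
    ⟨(hKS (hrange hx).1).resolve_right (hrange hx).2, hb x hx⟩
  have := (Cardinal.mk_le_mk_of_subset hbS).trans_lt (hS b)
  rw [Cardinal.mk_range_eq _ (Subtype.val_injective.comp hfi), ← Cardinal.power_def,
    Cardinal.mk_bool, Cardinal.mk_nat, Cardinal.two_power_aleph0] at this
  exact this.not_ge frd_le_continuum

theorem menger_union_cfin {S : Set CantorSp}
    (hS : ∀ b : ℕ → ℕ, #{s ∈ S | ∀ n, enum s n ≤ b n} < frd) : Menger ↥(S ∪ CFin) := by
  refine menger_of_forall_isOpen_mk_compl_lt_frd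
    (countable_cfin.preimage Subtype.val_injective) ?_
  rintro U hU hAU
  obtain ⟨W, hW, rfl⟩ := isOpen_induced_iff.mp hU
  have hCW : CFin ⊆ W := fun a ha => hAU (a := ⟨a, Or.inr ha⟩) ha
  obtain ⟨b, hb⟩ := exists_enum_le_of_isCompact hW.isClosed_compl.isCompact
    fun x hx hfin => hx (hCW hfin)
  have hsub : ((↑) ⁻¹' W : Set ↥(S ∪ CFin))ᶜ ⊆
      Subtype.val ⁻¹' {s ∈ S | ∀ n, enum s n ≤ b n} := by
    rintro ⟨x, hx⟩ hxW
    exact ⟨hx.resolve_right fun hfin => hxW (hCW hfin), hb x hxW⟩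
  exact ((Cardinal.mk_le_mk_of_subset hsub).trans
    (Cardinal.mk_preimage_of_injective _ _ Subtype.val_injective)).trans_lt (hS b)

theorem not_sigmaCompactSpace_union_cfin {S : Set CantorSp} (hSd : frd ≤ #S)
    (hS : ∀ b : ℕ → ℕ, #{s ∈ S | ∀ n, enum s n ≤ b n} < frd) :
    ¬ SigmaCompactSpace ↥(S ∪ CFin) := by
  rw [← isSigmaCompact_iff_sigmaCompactSpace]
  rintro ⟨K, hK, hKS⟩
  have hcount : (S ∪ CFin).Countable := by
    refine (countable_cfin.union (countable_iUnion fun n =>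
      countable_diff_cfin_of_isCompact hS (hK n) (hKS ▸ subset_iUnion K n))).mono ?_
    intro x hx
    by_cases hxF : x ∈ CFin
    · exact Or.inl hxF
    · obtain ⟨n, hn⟩ := mem_iUnion.mp (hKS ▸ hx : x ∈ ⋃ n, K n)
      exact Or.inr (mem_iUnion.mpr ⟨n, hn, hxF⟩)
  have := hSd.trans ((Cardinal.mk_le_mk_of_subset subset_union_left).trans
    (Cardinal.mk_le_aleph0_iff.mpr hcount.to_subtype))
  exact this.not_gt aleph0_lt_frd

theorem stmt0_general (S : Set CantorSp) (hunb : KappaUnbounded frd S) :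
    Menger ↥(S ∪ CFin) ∧ ¬ SigmaCompactSpace ↥(S ∪ CFin) :=
  ⟨menger_union_cfin hunb.2, not_sigmaCompactSpace_union_cfin hunb.1 hunb.2⟩

/-- For a `𝔡`-unbounded set `S ⊆ [ℕ]^∞`, the subspace `S ∪ Fin` of the Cantor
space is Menger but not σ-compact. -/
theorem stmt0 (S : Set CantorSp) (hS : S ⊆ CInf) (hunb : KappaUnbounded frd S) :
    Menger ↥(S ∪ CFin) ∧ ¬ SigmaCompactSpace ↥(S ∪ CFin) :=
  stmt0_general S hunb
end OmissionOfIntervals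
end

section
/- For each unbounded 𝔟-tower T ⊆ [ℕ]^∞, the subspace T ∪ Fin of the Cantor space 𝒫(ℕ) satisfies S1(Γ,Γ). -/
open Set Filter Cardinal

namespace OmissionOfIntervals

/-!
Enumerate the `n`-th point-cofinite cover as `O n 0, O n 1, …`. Since only finitely many finite
sets lie below `k`, compactness gives, for all `n, k, j`, an index `m ≥ j` and a bound `L` such
that `O n m` contains every set disjoint from the window `[k, L)`; let `Λ` dominate these bounds
diagonally. If every tower member met all but finitely many windows `[k, Λ k)`, the iterates of
`Λ` would bound the tower, so some `t α` misses infinitely many of them. The fewer than `𝔟`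
members `t β`, `β < α`, have membership thresholds bounded by a single `g`. In the `n`-th cover
pick an index beyond `g n` whose set contains everything disjoint from a window `[k, Λ k)` missed
by `t α`, with `k ≥ n, g n`: this catches the `t β` with `β < α`, and every set almost contained
in `t α` (the later tower members and the finite sets) eventually misses those windows too.
-/

def vanishingOn (s : Set ℕ) : Set CantorSp := {x | ∀ i ∈ s, x i = false}

lemma vanishingOn_anti {s s' : Set ℕ} (h : s ⊆ s') : vanishingOn s' ⊆ vanishingOn s :=
  fun _ hx i hi => hx i (h hi)

lemma isClosed_vanishingOn (s : Set ℕ) : IsClosed (vanishingOn s) := by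
  simp only [vanishingOn, ofPred_forall]
  exact isClosed_biInter fun i _ => isClosed_eq (continuous_apply i) continuous_const

lemma finite_vanishingOn_Ici (k : ℕ) : (vanishingOn (Ici k)).Finite := by
  refine Set.Finite.of_finite_image (f := fun x (i : Fin k) => x i) (Set.toFinite _) ?_
  intro x hx y hy hxy
  funext i
  by_cases hi : i < k
  · exact congrFun hxy ⟨i, hi⟩
  · rw [hx i (not_lt.1 hi), hy i (not_lt.1 hi)]

lemma vanishingOn_Ici_subset_cFin (k : ℕ) : vanishingOn (Ici k) ⊆ CFin := by
  intro x hx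
  refine (finite_Iio k).subset fun i hi => ?_
  by_contra hik
  simp_all [vanishingOn]

/-- Otherwise the compact sets `vanishingOn (Ico k L) \ O` are nonempty and decreasing in `L`, so
they share a point, which lies in `vanishingOn (Ici k) \ O`. -/
lemma exists_vanishingOn_Ico_subset {O : Set CantorSp} (hO : IsOpen O) {k : ℕ}
    (h : vanishingOn (Ici k) ⊆ O) : ∃ L, vanishingOn (Ico k L) ⊆ O := by
  by_contra! hne
  have hclosed : ∀ L, IsClosed (vanishingOn (Ico k L) \ O) := fun L =>
    (isClosed_vanishingOn _).sdiff hO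
  obtain ⟨x, hx⟩ := IsCompact.nonempty_iInter_of_sequence_nonempty_isCompact_isClosed
    (fun L => vanishingOn (Ico k L) \ O)
    (fun L => sdiff_subset_sdiff_left (vanishingOn_anti (Ico_subset_Ico_right L.le_succ)))
    (fun L => sdiff_nonempty.2 (hne L)) (hclosed 0).isCompact hclosed
  simp only [mem_iInter, Set.mem_sdiff] at hx
  exact (hx 0).2 (h fun i hi => (hx (i + 1)).1 i ⟨hi, i.lt_succ_self⟩)

lemma eventually_exists_vanishingOn_Ico_subset {O : ℕ → Set CantorSp} (hO : ∀ m, IsOpen (O m))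
    (hfin : ∀ x ∈ CFin, ∀ᶠ m in atTop, x ∈ O m) (k : ℕ) :
    ∀ᶠ m in atTop, ∃ L, vanishingOn (Ico k L) ⊆ O m := by
  have hall : ∀ᶠ m in atTop, vanishingOn (Ici k) ⊆ O m :=
    (finite_vanishingOn_Ici k).eventually_all.2 fun x hx =>
      hfin x (vanishingOn_Ici_subset_cFin k hx)
  exact hall.mono fun m hm => exists_vanishingOn_Ico_subset (hO m) hm

lemma SubStar.eventually_vanishingOn {x a : CantorSp} (h : SubStar x a) :
    ∀ᶠ k in atTop, ∀ s ⊆ Ici k, a ∈ vanishingOn s → x ∈ vanishingOn s := by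
  obtain ⟨M, hM⟩ := h.bddAbove
  filter_upwards [eventually_gt_atTop M] with k hk s hs ha i hi
  by_contra hxi
  have : i ≤ M := hM ⟨by simpa using hxi, by simp [ha i hi]⟩
  have : k ≤ i := hs hi
  omega

lemma subStar_of_mem_cFin {x : CantorSp} (hx : x ∈ CFin) (a : CantorSp) : SubStar x a :=
  Set.Finite.subset hx fun _ hi => hi.1

lemma IsTower.exists_lt_or_subStar {κ : Cardinal} {t : Ordinal → CantorSp} (ht : IsTower κ t)
    (α : Ordinal) {x : CantorSp} (hx : x ∈ rangeBelow t κ.ord ∪ CFin) :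
    (∃ β < α, x = t β) ∨ SubStar x (t α) := by
  rcases hx with ⟨β, hβ, rfl⟩ | hx
  · rcases lt_or_ge β α with hβα | hαβ
    · exact Or.inl ⟨β, hβα, rfl⟩
    · rcases hαβ.eq_or_lt with rfl | hαβ
      · exact Or.inr (by simp [SubStar])
      · exact Or.inr (ht.2 α β hαβ hβ)
  · exact Or.inr (subStar_of_mem_cFin hx _)

lemma Nat.nth_lt_of_forall_exists_Ico {p : ℕ → Prop} [DecidablePred p] {m : ℕ → ℕ} {i₀ : ℕ}
    (h : ∀ i ≥ i₀, ∃ j ∈ Ico (m i) (m (i + 1)), p j) (n : ℕ) :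
    Nat.nth p n < m (i₀ + n + 1) := by
  have hcount : ∀ c, c ≤ Nat.count p (m (i₀ + c)) := by
    intro c
    induction c with
    | zero => exact Nat.zero_le _
    | succ c ih =>
      obtain ⟨j, ⟨hj₁, hj₂⟩, hpj⟩ := h (i₀ + c) (Nat.le_add_right _ _)
      have := Nat.count_monotone p hj₁
      have := Nat.count_strict_mono hpj hj₂
      rw [← Nat.add_assoc]
      omega
  exact Nat.nth_lt_of_lt_count (Nat.lt_of_lt_of_le n.lt_succ_self (hcount (n + 1)))

lemma enum_leStar_iterate {Λ : ℕ → ℕ} (hΛ : ∀ k, k < Λ k) {a : CantorSp}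
    (h : ∀ᶠ k in atTop, a ∉ vanishingOn (Ico k (Λ k))) :
    LeStar (enum a) (fun n => Λ^[2 * n + 1] 0) := by
  have hm : StrictMono fun i => Λ^[i] 0 := strictMono_nat_of_lt_succ fun i => by
    simpa only [Function.iterate_succ_apply'] using hΛ _
  obtain ⟨K, hK⟩ := eventually_atTop.1 h
  have hmeet : ∀ i ≥ K, ∃ j ∈ Ico (Λ^[i] 0) (Λ^[i + 1] 0), a j = true := by
    intro i hi
    have := hK _ (hi.trans (hm.id_le i))
    simpa [vanishingOn, Function.iterate_succ_apply', and_assoc] using this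
  filter_upwards [eventually_ge_atTop K] with n hn
  calc enum a n ≤ Λ^[K + n + 1] 0 := (Nat.nth_lt_of_forall_exists_Ico hmeet n).le
    _ ≤ Λ^[2 * n + 1] 0 := hm.monotone (by omega)

lemma exists_frequently_mem_vanishingOn_Ico {t : Ordinal → CantorSp} {o : Ordinal}
    (ht : UnboundedFam {f | ∃ α < o, f = enum (t α)}) {Λ : ℕ → ℕ} (hΛ : ∀ k, k < Λ k) :
    ∃ α < o, ∃ᶠ k in atTop, t α ∈ vanishingOn (Ico k (Λ k)) := by
  by_contra! h
  exact ht ⟨fun n => Λ^[2 * n + 1] 0, by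
    rintro _ ⟨α, hα, rfl⟩
    exact enum_leStar_iterate hΛ (h α hα)⟩

lemma exists_diagonal_bound (L : ℕ → ℕ → ℕ → ℕ) :
    ∃ Λ : ℕ → ℕ, (∀ k, k < Λ k) ∧ ∀ n k j, n ≤ k → j ≤ k → L n k j ≤ Λ k := by
  refine ⟨fun k => k + 1 + ∑ n ∈ Finset.range (k + 1), ∑ j ∈ Finset.range (k + 1), L n k j,
    fun k => Nat.lt_of_lt_of_le k.lt_succ_self (Nat.le_add_right _ _), fun n k j hn hj => ?_⟩
  calc L n k j ≤ ∑ j ∈ Finset.range (k + 1), L n k j :=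
        Finset.single_le_sum (fun _ _ => Nat.zero_le _) (Finset.mem_range_succ_iff.2 hj)
    _ ≤ ∑ n ∈ Finset.range (k + 1), ∑ j ∈ Finset.range (k + 1), L n k j :=
        Finset.single_le_sum (f := fun n => ∑ j ∈ Finset.range (k + 1), L n k j)
          (fun _ _ => Nat.zero_le _) (Finset.mem_range_succ_iff.2 hn)
    _ ≤ _ := Nat.le_add_left _ _

lemma exists_forall_leStar_of_mk_lt_frb {S : Set (ℕ → ℕ)} (hS : #S < frb) :
    ∃ g, ∀ f ∈ S, LeStar f g := by
  by_contra h
  exact hS.not_ge (csInf_le' ⟨S, h, rfl⟩)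

lemma exists_forall_leStar_of_lt_ord {α : Ordinal} (hα : α < frb.ord) (F : ∀ β < α, ℕ → ℕ) :
    ∃ g, ∀ β (hβ : β < α), LeStar (F β hβ) g := by
  have hcard : #(range fun β : Iio α => F β.1 β.2) < frb := by
    have hle := Cardinal.mk_range_le_lift (f := fun β : Iio α => F β.1 β.2)
    rw [Cardinal.mk_Iio_ordinal, lift_lift, Cardinal.lift_le] at hle
    exact hle.trans_lt (lt_ord.1 hα)
  obtain ⟨g, hg⟩ := exists_forall_leStar_of_mk_lt_frb hcard
  exact ⟨g, fun β hβ => hg _ ⟨⟨β, hβ⟩, rfl⟩⟩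

lemma PointCofiniteCover.eventually_mem {X : Type*} [TopologicalSpace X] {𝒰 : Set (Set X)}
    (h : PointCofiniteCover 𝒰) {V : ℕ → Set X} (hV : Function.Injective V) (hV𝒰 : ∀ i, V i ∈ 𝒰)
    (x : X) : ∀ᶠ i in atTop, x ∈ V i := by
  rw [← Nat.cofinite_eq_atTop, eventually_cofinite]
  exact ((h.2.2 x).preimage hV.injOn).subset fun i hi => ⟨hV𝒰 i, hi⟩

lemma s1GammaGamma_of_exists_diagonal {X : Type*} [TopologicalSpace X]
    (h : ∀ V : ℕ → ℕ → Set X, (∀ n m, IsOpen (V n m)) → (∀ x n, ∀ᶠ m in atTop, x ∈ V n m) →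
      ∃ m : ℕ → ℕ, ∀ x, ∀ᶠ n in atTop, x ∈ V n (m n)) :
    S1GammaGamma X := by
  intro 𝒰 h𝒰
  let e n : ℕ ↪ 𝒰 n := (h𝒰 n).2.1.natEmbedding
  obtain ⟨m, hm⟩ := h (fun n i => e n i) (fun n i => (h𝒰 n).1 _ (e n i).2) fun x n =>
    (h𝒰 n).eventually_mem (Subtype.val_injective.comp (e n).injective) (fun i => (e n i).2) x
  exact ⟨fun n => e n (m n), fun n => (e n _).2, hm⟩

lemma s1GammaGamma_subtype_of_exists_diagonal {Z : Type*} [TopologicalSpace Z] {Y : Set Z}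
    (h : ∀ O : ℕ → ℕ → Set Z, (∀ n m, IsOpen (O n m)) →
      (∀ x ∈ Y, ∀ n, ∀ᶠ m in atTop, x ∈ O n m) →
      ∃ m : ℕ → ℕ, ∀ x ∈ Y, ∀ᶠ n in atTop, x ∈ O n (m n)) :
    S1GammaGamma Y := by
  refine s1GammaGamma_of_exists_diagonal fun V hV hVx => ?_
  choose O hO hOV using fun n m => isOpen_induced_iff.mp (hV n m)
  obtain ⟨m, hm⟩ := h O hO fun x hx n => by simpa [← hOV] using hVx ⟨x, hx⟩ n
  exact ⟨m, fun x => by simpa [← hOV] using hm x x.2⟩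

theorem IsUnboundedTower.exists_diagonal {t : Ordinal → CantorSp}
    (ht : IsUnboundedTower frb t) {O : ℕ → ℕ → Set CantorSp} (hO : ∀ n m, IsOpen (O n m))
    (hX : ∀ x ∈ rangeBelow t frb.ord ∪ CFin, ∀ n, ∀ᶠ m in atTop, x ∈ O n m) :
    ∃ m : ℕ → ℕ, ∀ x ∈ rangeBelow t frb.ord ∪ CFin, ∀ᶠ n in atTop, x ∈ O n (m n) := by
  choose M hMj Lb hLb using fun n k j => ((eventually_ge_atTop j).and
    (eventually_exists_vanishingOn_Ico_subset (hO n) (fun x hx => hX x (Or.inr hx) n) k)).exists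
  obtain ⟨Λ, hΛ, hLbΛ⟩ := exists_diagonal_bound Lb
  obtain ⟨α, hα, hgap⟩ := exists_frequently_mem_vanishingOn_Ico ht.2 hΛ
  choose F hF using fun β (hβ : β < α) n =>
    eventually_atTop.1 (hX (t β) (Or.inl ⟨β, hβ.trans hα, rfl⟩) n)
  obtain ⟨g, hg⟩ := exists_forall_leStar_of_lt_ord hα F
  choose k hk hkgap using fun n => frequently_atTop.1 hgap (max n (g n))
  refine ⟨fun n => M n (k n) (g n), fun x hx => ?_⟩
  rcases ht.1.exists_lt_or_subStar α hx with ⟨β, hβ, rfl⟩ | hsub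
  · filter_upwards [hg β hβ] with n hn
    exact hF β hβ n _ (hn.trans (hMj _ _ _))
  · have hk_tendsto : Tendsto k atTop atTop :=
      tendsto_atTop_mono (fun n => (le_max_left _ _).trans (hk n)) tendsto_id
    filter_upwards [hk_tendsto.eventually hsub.eventually_vanishingOn] with n hn
    refine hLb _ _ _ (hn _ Ico_subset_Ici_self (vanishingOn_anti ?_ (hkgap n)))
    exact Ico_subset_Ico_right (hLbΛ _ _ _ ((le_max_left _ _).trans (hk n))
      ((le_max_right _ _).trans (hk n)))

/-- For each unbounded `𝔟`-tower `T`, the subspace `T ∪ Fin` of the Cantor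
space satisfies `S1(Γ,Γ)`. -/
theorem stmt3 (t : Ordinal → CantorSp) (ht : IsUnboundedTower frb t) :
    S1GammaGamma ↥(rangeBelow t frb.ord ∪ CFin) :=
  s1GammaGamma_subtype_of_exists_diagonal fun _ hO hX => ht.exists_diagonal hO hX
end OmissionOfIntervals
end

section
/- For each unbounded 𝔭-tower T ⊆ [ℕ]^∞, the subspace T ∪ Fin of the Cantor space 𝒫(ℕ) is an ω-γ set: every open ω-cover of T ∪ Fin has a subfamily that is a point-cofinite cover of T ∪ Fin. -/
open Set Filter Cardinal

namespace OmissionOfIntervals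

/-!
Let `𝒰` be an ω-cover of `S = T ∪ Fin`, and call a clopen cylinder good if its trace on `S` lies in
a member of `𝒰`. As `Fin ⊆ S`, for each finite `G ⊆ S` and each `N` there is a good cylinder of
length `g_G(N) ≥ N` containing `G` and every point supported below `N`. Since `𝔭` is regular and
fewer than `𝔭` functions are `≤*`-bounded, some `t_α` escapes every bound derived from the `g_G`
with `G ⊆ {t_β : β < α}`. Then `t_α` omits infinitely many intervals `[N, g_G(N))`, and the
corresponding cylinders contain `G` together with every point supported in `t_α ∪ [0, M)`.
These families of good cylinders form a centered family of fewer than `𝔭` sets; the members of `𝒰`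
attached to a pseudointersection form the point-cofinite subcover, since every point of `S` other
than the `t_β` with `β < α` is almost contained in `t_α`.
-/

theorem LeStar.trans {f g h : ℕ → ℕ} (hfg : LeStar f g) (hgh : LeStar g h) : LeStar f h := by
  filter_upwards [hfg, hgh] with n h₁ h₂ using h₁.trans h₂

theorem exists_leStar_of_countable {F : Set (ℕ → ℕ)} (hF : F.Countable) :
    ∃ g, ∀ f ∈ F, LeStar f g := by
  obtain rfl | hne := F.eq_empty_or_nonempty
  · exact ⟨0, by simp⟩
  obtain ⟨u, rfl⟩ := hF.exists_eq_range hne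
  refine ⟨fun n => partialSups (fun k => u k n) n, ?_⟩
  rintro _ ⟨k, rfl⟩
  filter_upwards [eventually_ge_atTop k] with n hn
  exact le_partialSups_of_le (fun k => u k n) hn

theorem exists_pseudointersection_of_mk_lt_frp {ι κ : Type} [Countable ι] [Infinite ι]
    (C : κ → Set ι) (hκ : #κ < frp) (hC : ∀ F : Finset κ, (⋂ i ∈ F, C i).Infinite) :
    ∃ A : Set ι, A.Infinite ∧ ∀ i, (A \ C i).Finite := by
  classical
  obtain ⟨_⟩ := nonempty_denumerable ι
  let e := Denumerable.eqv ι
  let code : Set ι → CantorSp := fun s n => decide (e.symm n ∈ s)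
  have hinf : ∀ s : Set ι, s.Infinite → {n | e.symm n ∈ s}.Infinite := fun s hs => by
    change (e.symm ⁻¹' s).Infinite
    rw [← e.image_eq_preimage_symm]
    exact hs.image e.injective.injOn
  have hcent : Centered (range (code ∘ C)) := by
    refine ⟨?_, fun F hF => ?_⟩
    · rintro _ ⟨i, rfl⟩
      simpa [CInf, code] using hinf _ (by simpa using hC {i})
    · rw [← Set.image_univ, Finset.subset_set_image_iff] at hF
      obtain ⟨G, -, rfl⟩ := hF
      simpa [code] using hinf _ (hC G)
  obtain ⟨a, ha, hsub⟩ : HasPseudointersection (range (code ∘ C)) := by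
    by_contra h
    exact (csInf_le' ⟨_, hcent, h, rfl⟩ : frp ≤ _).not_gt (mk_range_le.trans_lt hκ)
  refine ⟨e.symm '' {n | a n = true}, ha.image e.symm.injective.injOn, fun i => ?_⟩
  convert (hsub _ ⟨i, rfl⟩).image e.symm using 1
  ext x
  simp [code]

theorem exists_leStar_of_mk_lt_frp (hp : ℵ₀ < frp) {F : Set (ℕ → ℕ)} (hF : #F < frp) :
    ∃ g, ∀ f ∈ F, LeStar f g := by
  classical
  -- the bound at `n` is read off a point `(k, m) ∈ A` with `n ≤ k`; for large `n` such points
  -- avoid the finitely many points of `A` where `m` fails to bound `f` on `[0, k]`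
  let C : F ⊕ ℕ → Set (ℕ × ℕ) :=
    Sum.elim (fun f => {p | ∀ k ≤ p.1, f.1 k ≤ p.2}) (fun k => {p | k ≤ p.1})
  have hC : ∀ G : Finset (F ⊕ ℕ), (⋂ i ∈ G, C i).Infinite := fun G => by
    let K := G.sup (Sum.elim 0 id)
    let m : ℕ → ℕ := fun n => G.sup (Sum.elim (fun f => partialSups f.1 n) 0)
    refine Set.infinite_of_injective_forall_mem (f := fun n => (n + K, m (n + K)))
      (fun a b h => by simpa using congrArg Prod.fst h) fun n => ?_
    simp only [Set.mem_iInter]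
    rintro (f | k) hi
    · intro j hj
      exact (le_partialSups_of_le f.1 hj).trans
        (Finset.le_sup (f := Sum.elim (fun f => partialSups f.1 (n + K)) 0) hi)
    · exact (Finset.le_sup (f := Sum.elim 0 id) hi).trans (Nat.le_add_left _ _)
  obtain ⟨A, hA, hAC⟩ :=
    exists_pseudointersection_of_mk_lt_frp C (by simpa using add_lt_of_lt hp.le hF hp) hC
  have hpt : ∀ n, ∃ p ∈ A, n ≤ p.1 := fun n => by
    obtain ⟨p, hpA, hp⟩ := (hA.sdiff (hAC (.inr n))).nonempty
    exact ⟨p, hpA, by by_contra h; exact hp ⟨hpA, h⟩⟩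
  choose p hpA hpn using hpt
  refine ⟨fun n => (p n).2, fun f hf => ?_⟩
  obtain ⟨b, hb⟩ := ((hAC (.inl ⟨f, hf⟩)).image Prod.fst).bddAbove
  filter_upwards [eventually_gt_atTop b] with n hn
  by_contra h
  exact (hb ⟨p n, ⟨hpA n, fun hC => h (hC n (hpn n))⟩, rfl⟩).not_gt (hn.trans_le (hpn n))

theorem mk_finset_lt {α : Type*} {c : Cardinal} (hc : ℵ₀ < c) (h : #α < c) : #(Finset α) < c := by
  cases finite_or_infinite α
  · exact (Cardinal.lt_aleph0_of_finite _).trans hc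
  · rwa [Cardinal.mk_finset_of_infinite]

theorem enum_le_enum_add_of_subStar {a b : CantorSp} (ha : a ∈ CInf) (hab : SubStar a b) :
    ∃ N, ∀ n, enum b n ≤ enum a (n + N) := by
  obtain ⟨N, hN⟩ := hab.bddAbove
  refine ⟨N + 1, fun n => Nat.nth_le_of_strictMonoOn_of_mapsTo _ (fun k _ => ?_)
    (((Nat.nth_strictMono ha).comp (strictMono_id.add_const (N + 1))).strictMonoOn _)⟩
  by_contra hk
  have h₁ : enum a (k + (N + 1)) ≤ N := hN ⟨Nat.nth_mem_of_infinite ha _, hk⟩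
  have h₂ : k + (N + 1) ≤ enum a (k + (N + 1)) := (Nat.nth_strictMono ha).le_apply
  omega

theorem SubStar.exists_subset_union_Iio {a b : CantorSp} (h : SubStar a b) :
    ∃ M, {n | a n = true} ⊆ {n | b n = true} ∪ Iio M := by
  obtain ⟨M, hM⟩ := h.bddAbove
  exact ⟨M + 1, fun n hn => or_iff_not_imp_left.2 fun hb => Nat.lt_succ_of_le (hM ⟨hn, hb⟩)⟩

theorem leStar_iterate_of_le {e G : ℕ → ℕ} (hG : Monotone G) (hGid : id ≤ G) {m : ℕ}
    (he : ∀ n ≥ m, e (n + 1) ≤ G (e n)) : LeStar e (fun n => G^[n] n) := by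
  have hind : ∀ j, e (m + j) ≤ G^[j] (e m) := by
    intro j
    induction j with
    | zero => simp
    | succ j ih =>
      rw [Function.iterate_succ_apply', ← add_assoc]
      exact (he _ (by omega)).trans (hG ih)
  filter_upwards [eventually_ge_atTop m, eventually_ge_atTop (e m)] with n hm hem
  obtain ⟨j, rfl⟩ := Nat.exists_eq_add_of_le hm
  calc e (m + j) ≤ G^[j] (e m) := hind j
    _ ≤ G^[j] (G^[m] (m + j)) :=
      hG.iterate j (hem.trans (Function.id_le_iterate_of_id_le hGid m _))
    _ = G^[m + j] (m + j) := by rw [← Function.iterate_add_apply, add_comm]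

/-- If `x` meets `[N, g N)` for all large `N`, consecutive elements of `x` are at most one
step of `k ↦ max (k + 1) (partialSups g (k + 1))` apart. -/
def gapBound (g : ℕ → ℕ) (n : ℕ) : ℕ :=
  (fun k => max (k + 1) (partialSups g (k + 1)))^[n] n

theorem infinite_setOf_gap_of_not_leStar {x : CantorSp} (hx : x ∈ CInf) {g : ℕ → ℕ}
    (h : ¬ LeStar (enum x) (gapBound g)) :
    {N | ∀ k, x k = true → N ≤ k → g N ≤ k}.Infinite := by
  by_contra hfin
  obtain ⟨N₀, hN₀⟩ := (Set.not_infinite.1 hfin).bddAbove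
  refine h (leStar_iterate_of_le (m := N₀)
    (fun a b hab => max_le_max (by omega) ((partialSups g).monotone (by omega)))
    (fun k => le_max_of_le_left k.le_succ) fun n hn => ?_)
  have hnotgap : enum x n + 1 ∉ {N | ∀ k, x k = true → N ≤ k → g N ≤ k} := fun hgap => by
    have := hN₀ hgap
    have : n ≤ enum x n := (Nat.nth_strictMono hx).le_apply
    omega
  simp only [Set.mem_ofPred_eq, not_forall, not_le] at hnotgap
  obtain ⟨k, hk, hnk, hkg⟩ := hnotgap
  have hsucc : enum x (n + 1) ≤ k := by
    by_contra hlt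
    have : k ≤ enum x n := Nat.le_nth_of_lt_nth_succ (not_le.1 hlt) hk
    omega
  exact hsucc.trans (hkg.le.trans ((le_partialSups g _).trans (le_max_right _ _)))

theorem mk_image_Iio_le {α : Type} (f : Ordinal → α) (o : Ordinal) : #(f '' Iio o) ≤ o.card := by
  rw [← Cardinal.lift_le.{1}]
  simpa using Cardinal.mk_image_le_lift (f := f) (s := Iio o)

theorem exists_lt_finset_subset_image {X : Type*} (t : Ordinal → X) {α : Ordinal} (hα : 0 < α)
    {G : Finset X} (hG : ↑G ⊆ t '' Iio α) : ∃ β < α, ↑G ⊆ t '' Iio (Order.succ β) := by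
  classical
  obtain ⟨Γ, hΓ, rfl⟩ := Finset.subset_set_image_iff.1 hG
  refine ⟨Γ.sup id, (Finset.sup_lt_iff hα).2 fun γ hγ => hΓ hγ, ?_⟩
  rw [Finset.coe_image]
  exact image_mono fun γ hγ => Order.lt_succ_of_le (Finset.le_sup (f := id) hγ)

theorem IsTower.subStar {κ : Cardinal} {t : Ordinal → CantorSp} (ht : IsTower κ t)
    {α β : Ordinal} (hαβ : α ≤ β) (hβ : β < κ.ord) : SubStar (t β) (t α) := by
  rcases hαβ.lt_or_eq with h | rfl
  · exact ht.2 α β h hβ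
  · simp [SubStar]

theorem IsTower.eq_or_subset_union_Iio {κ : Cardinal} {t : Ordinal → CantorSp} (ht : IsTower κ t)
    (α : Ordinal) {p : CantorSp} (hp : p ∈ rangeBelow t κ.ord ∪ CFin) :
    (∃ γ < α, p = t γ) ∨ ∃ M, {n | p n = true} ⊆ {n | t α n = true} ∪ Iio M := by
  rcases hp with ⟨γ, hγ, rfl⟩ | hp
  · rcases lt_or_ge γ α with h | h
    · exact .inl ⟨γ, h, rfl⟩
    · exact .inr (ht.subStar h hγ).exists_subset_union_Iio
  · exact .inr (SubStar.exists_subset_union_Iio (hp.subset fun n hn => hn.1))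

theorem IsUnboundedTower.exists_not_leStar {κ : Cardinal} {t : Ordinal → CantorSp}
    (ht : IsUnboundedTower κ t) (g : ℕ → ℕ) : ∃ α < κ.ord, ¬ LeStar (enum (t α)) g := by
  by_contra! h
  exact ht.2 ⟨g, by rintro _ ⟨α, hα, rfl⟩; exact h α hα⟩

namespace IsUnboundedTower

variable {t : Ordinal → CantorSp}

theorem aleph0_lt_frp (ht : IsUnboundedTower frp t) : ℵ₀ < frp := by
  by_contra! h
  have hcount : (Iio frp.ord).Countable := by
    rw [← Cardinal.le_aleph0_iff_set_countable, Cardinal.mk_Iio_ordinal, Cardinal.card_ord]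
    simpa using Cardinal.lift_le.{1}.2 h
  obtain ⟨g, hg⟩ := exists_leStar_of_countable (hcount.image fun α => enum (t α))
  obtain ⟨α, hα, hαg⟩ := ht.exists_not_leStar g
  exact hαg (hg _ ⟨α, hα, rfl⟩)

theorem isRegular_frp (ht : IsUnboundedTower frp t) : frp.IsRegular := by
  have hp := ht.aleph0_lt_frp
  have hlim := Cardinal.isSuccLimit_ord hp.le
  refine ⟨hp.le, ?_⟩
  rw [← Cardinal.lift_le.{1}, Ordinal.lift_cof, ← Ordinal.cof_Iio, Order.le_cof_iff]
  intro s hs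
  by_contra! hs'
  choose g hg using fun σ : s => exists_leStar_of_mk_lt_frp hp
    ((mk_image_Iio_le (fun α => enum (t α)) (Order.succ σ.1.1)).trans_lt
      (Cardinal.lt_ord.1 (hlim.succ_lt σ.1.2)))
  obtain ⟨g', hg'⟩ := exists_leStar_of_mk_lt_frp hp (F := range g)
    (Cardinal.lift_lt.1 (mk_range_le_lift.trans_lt (by rwa [Cardinal.lift_id'])))
  obtain ⟨α, hα, hαg⟩ := ht.exists_not_leStar g'
  obtain ⟨σ, hσ, hασ⟩ := hs ⟨α, hα⟩
  have hασ' : α < Order.succ σ.1 := Order.lt_succ_iff.2 hασ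
  exact hαg ((hg ⟨σ, hσ⟩ _ ⟨α, hασ', rfl⟩).trans (hg' _ ⟨_, rfl⟩))

theorem exists_tail_not_leStar (ht : IsUnboundedTower frp t) (H : ℕ → ℕ) :
    ∃ δ < frp.ord, ∀ α, δ ≤ α → α < frp.ord → ¬ LeStar (enum (t α)) H := by
  by_contra! h
  obtain ⟨ξ, hξ, hξH⟩ := ht.exists_not_leStar fun n => partialSups H (2 * n)
  obtain ⟨α, hξα, hα, hαH⟩ := h ξ hξ
  obtain ⟨N, hN⟩ := enum_le_enum_add_of_subStar (ht.1.1 α hα) (ht.1.subStar hξα hα)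
  apply hξH
  filter_upwards [(tendsto_add_atTop_nat N).eventually hαH, eventually_ge_atTop N] with n hn hNn
  exact (hN n).trans (hn.trans (le_partialSups_of_le H (by omega)))

theorem exists_escaping (ht : IsUnboundedTower frp t) (Φ : Ordinal → Set (ℕ → ℕ))
    (hΦ : ∀ β < frp.ord, #(Φ β) < frp) :
    ∃ α < frp.ord, 0 < α ∧ ∀ β < α, ∀ φ ∈ Φ β, ¬ LeStar (enum (t α)) φ := by
  have hp := ht.aleph0_lt_frp
  have hcof : frp.ord.cof = frp := ht.isRegular_frp.cof_ord
  have hlim := Cardinal.isSuccLimit_ord hp.le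
  have hpos : 0 < frp.ord := hlim.bot_lt
  have hδex : ∀ β, ∃ δ < frp.ord, β < frp.ord →
      ∀ α, δ ≤ α → α < frp.ord → ∀ φ ∈ Φ β, ¬ LeStar (enum (t α)) φ := by
    intro β
    by_cases hβ : β < frp.ord
    · obtain ⟨H, hH⟩ := exists_leStar_of_mk_lt_frp hp (hΦ β hβ)
      obtain ⟨δ, hδ, hδH⟩ := ht.exists_tail_not_leStar H
      exact ⟨δ, hδ, fun _ α h₁ h₂ φ hφ hαφ => hδH α h₁ h₂ (hαφ.trans (hH φ hφ))⟩
    · exact ⟨0, hpos, fun h => (hβ h).elim⟩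
  -- the tower escapes `Φ β` from `δ β` on, and `nfp f 0` is closed under `δ`
  choose δ hδ hδesc using hδex
  let f : Ordinal → Ordinal := fun ξ => max (Order.succ ξ) (⨆ β : Iio (Order.succ ξ), δ β)
  have hf : ∀ ξ < frp.ord, f ξ < frp.ord := fun ξ hξ => by
    have hcard : Cardinal.lift.{0} #(Iio (Order.succ ξ)) < (Ordinal.lift.{1} frp.ord).cof := by
      rw [Cardinal.mk_Iio_ordinal, ← Ordinal.lift_cof, hcof, Cardinal.lift_lift, Cardinal.lift_lt]
      exact Cardinal.lt_ord.1 (hlim.succ_lt hξ)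
    exact max_lt (hlim.succ_lt hξ) (Ordinal.lift_iSup_lt_of_lt_cof hcard fun β => hδ β)
  have hα := Ordinal.nfp_lt_ord (by rw [hcof]; exact hp) hf hpos
  refine ⟨Ordinal.nfp f 0, hα, ?_, fun β hβ φ hφ => ?_⟩
  · exact (Order.lt_succ 0).trans_le ((le_max_left _ _).trans (Ordinal.iterate_le_nfp f 0 1))
  · obtain ⟨n, hn⟩ := Ordinal.lt_nfp_iff.1 hβ
    refine hδesc β (hβ.trans hα) _ ?_ hα φ hφ
    calc δ β ≤ ⨆ γ : Iio (Order.succ (f^[n] 0)), δ γ :=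
          le_ciSup (f := fun γ : Iio _ => δ γ) Ordinal.bddAbove_of_small
            ⟨β, Order.lt_succ_of_le hn.le⟩
      _ ≤ f (f^[n] 0) := le_max_right _ _
      _ = f^[n + 1] 0 := (Function.iterate_succ_apply' f n 0).symm
      _ ≤ Ordinal.nfp f 0 := Ordinal.iterate_le_nfp f 0 (n + 1)

end IsUnboundedTower

-- codes of clopen cylinders, a countable index type for the pseudointersection argument
abbrev Code : Type := Σ m : ℕ, Set (Fin m → Bool)

def Cyl (d : Code) : Set CantorSp := {x | (fun i : Fin d.1 => x i) ∈ d.2}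

theorem mem_cyl_congr {d : Code} {x y : CantorSp} (h : ∀ i < d.1, x i = y i) :
    x ∈ Cyl d ↔ y ∈ Cyl d := by
  have : (fun i : Fin d.1 => x i) = fun i : Fin d.1 => y i := funext fun i => h i i.2
  simp only [Cyl, Set.mem_ofPred_eq, this]

theorem exists_code_of_isOpen {V : Set CantorSp} (hV : IsOpen V) {G : Finset CantorSp}
    (hG : ↑G ⊆ V) (N : ℕ) : ∃ d : Code, N ≤ d.1 ∧ (∀ x ∈ G, x ∈ Cyl d) ∧ Cyl d ⊆ V := by
  have : ∀ x ∈ G, ∃ m, PiNat.cylinder x m ⊆ V := fun x hx => by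
    obtain ⟨_, ⟨y, m, rfl⟩, hxy, hyV⟩ :=
      (PiNat.isTopologicalBasis_cylinders _).exists_subset_of_mem_open (hG hx) hV
    exact ⟨m, by rwa [PiNat.mem_cylinder_iff_eq.1 hxy]⟩
  choose! m hm using this
  refine ⟨⟨max N (G.sup m), {σ | ∃ x ∈ G, σ = fun i : Fin _ => x i}⟩, le_max_left _ _,
    fun x hx => ⟨x, hx, rfl⟩, ?_⟩
  rintro y ⟨x, hx, hxy⟩
  refine hm x hx (PiNat.mem_cylinder_iff.2 fun i hi => congrFun hxy ⟨i, ?_⟩)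
  exact hi.trans_le ((Finset.le_sup hx).trans (le_max_right _ _))

def Captures (d : Code) (B : Set ℕ) : Prop := ∀ x : CantorSp, {n | x n = true} ⊆ B → x ∈ Cyl d

theorem Captures.mono {d : Code} {B B' : Set ℕ} (h : Captures d B) (hB : B' ⊆ B) :
    Captures d B' := fun x hx => h x (hx.trans hB)

theorem Captures.union_Iio_of_gap {d : Code} {B : Set ℕ} {M N : ℕ} (hd : Captures d (Iio N))
    (hMN : M ≤ N) (hgap : ∀ k ∈ B, N ≤ k → d.1 ≤ k) : Captures d (B ∪ Iio M) := by
  intro x hx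
  refine (mem_cyl_congr fun i hi => ?_).1 (hd (fun n => x n && decide (n < d.1)) ?_)
  · simp [hi]
  · intro n hn
    simp only [Set.mem_ofPred_eq, Bool.and_eq_true, decide_eq_true_eq] at hn
    rcases hx hn.1 with h | h
    · exact not_le.1 fun hNn => (hgap n h hNn).not_gt hn.2
    · exact (Set.mem_Iio.1 h).trans_le hMN

theorem pointCofiniteCover_image {X ι : Type*} [TopologicalSpace X] {sel : ι → Set X}
    (hopen : ∀ i, IsOpen (sel i)) (hne : ∀ i, sel i ≠ Set.univ) {A : Set ι} (hA : A.Infinite)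
    (hpt : ∀ x, {i ∈ A | x ∉ sel i}.Finite) : PointCofiniteCover (sel '' A) := by
  refine ⟨?_, fun hfin => ?_, fun x => ?_⟩
  · rintro _ ⟨i, -, rfl⟩
    exact hopen i
  · obtain ⟨_, ⟨i, -, rfl⟩, hfib⟩ : ∃ U ∈ sel '' A, (A ∩ sel ⁻¹' {U}).Infinite := by
      by_contra! h
      exact hA (.of_finite_fibers sel hfin h)
    refine hne i (eq_univ_of_forall fun x => ?_)
    obtain ⟨j, ⟨hjA, hj⟩, hjx⟩ := (hfib.sdiff (hpt x)).nonempty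
    by_contra hx
    exact hjx ⟨hjA, by rwa [Set.mem_singleton_iff.1 hj]⟩
  · refine ((hpt x).image sel).subset ?_
    rintro _ ⟨⟨i, hi, rfl⟩, hx⟩
    exact ⟨i, ⟨hi, hx⟩, rfl⟩

section OmegaCover

variable {S : Set CantorSp} {𝒰 : Set (Set S)}

def goodCodes (𝒰 : Set (Set S)) : Set Code := {d | ∃ U ∈ 𝒰, Subtype.val ⁻¹' Cyl d ⊆ U}

theorem exists_goodCode (h𝒰 : OmegaCover 𝒰) {G : Finset CantorSp} (hG : ↑G ⊆ S) (N : ℕ) :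
    ∃ d ∈ goodCodes 𝒰, N ≤ d.1 ∧ ∀ x ∈ G, x ∈ Cyl d := by
  classical
  obtain ⟨U, hU, hGU⟩ := h𝒰.2.2 (G.subtype (· ∈ S))
  obtain ⟨V, hV, rfl⟩ := isOpen_induced_iff.1 (h𝒰.1 U hU)
  obtain ⟨d, hNd, hGd, hdV⟩ := exists_code_of_isOpen hV
    (fun x hx => @hGU ⟨x, hG hx⟩ (Finset.mem_subtype.2 hx)) N
  exact ⟨d, ⟨_, hU, preimage_mono hdV⟩, hNd, hGd⟩

theorem exists_goodCode_captures (h𝒰 : OmegaCover 𝒰) (hS : CFin ⊆ S) {G : Finset CantorSp}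
    (hG : ↑G ⊆ S) (N : ℕ) :
    ∃ d ∈ goodCodes 𝒰, N ≤ d.1 ∧ (∀ x ∈ G, x ∈ Cyl d) ∧ Captures d (Iio N) := by
  classical
  let chi : Finset ℕ → CantorSp := fun w n => decide (n ∈ w)
  have hchi : ∀ w, chi w ∈ S := fun w =>
    hS (w.finite_toSet.subset fun n hn => by simpa [chi] using hn)
  obtain ⟨d, hd, hNd, hGd⟩ := exists_goodCode h𝒰
    (G := G ∪ (Finset.range N).powerset.image chi) (by
      simp only [Finset.coe_union, Finset.coe_image, union_subset_iff, image_subset_iff]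
      exact ⟨hG, fun w _ => hchi w⟩) N
  refine ⟨d, hd, hNd, fun x hx => hGd x (Finset.mem_union_left _ hx), fun x hx => ?_⟩
  have : x = chi ((Finset.range N).filter (x · = true)) := by
    funext n
    by_cases h : x n = true
    · have : n < N := hx h
      simp [chi, h, this]
    · simp [chi, h]
  rw [this]
  exact hGd _ (Finset.mem_union_right _ (Finset.mem_image_of_mem _ (by simp)))

end OmegaCover

theorem infinite_setOf_captures {P : Set Code} {c : ℕ → Code}
    (hc : ∀ N, c N ∈ P ∧ N ≤ (c N).1 ∧ Captures (c N) (Iio N)) {y : CantorSp} (hy : y ∈ CInf)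
    (hesc : ¬ LeStar (enum y) (gapBound fun N => (c N).1)) (M : ℕ) :
    {d ∈ P | Captures d ({n | y n = true} ∪ Iio M)}.Infinite := by
  intro hfin
  obtain ⟨L, hL⟩ := (hfin.image fun d => d.1).bddAbove
  obtain ⟨N, ⟨hgap, hMN⟩, hLN⟩ := (((infinite_setOf_gap_of_not_leStar hy hesc).sdiff
    (Set.finite_Iio M)).sdiff (Set.finite_Iic L)).nonempty
  obtain ⟨hcP, hNc, hcN⟩ := hc N
  have : (c N).1 ≤ L := hL ⟨c N, ⟨hcP, hcN.union_Iio_of_gap (not_lt.1 hMN) hgap⟩, rfl⟩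
  simp only [Set.mem_Iic] at hLN
  omega

section TowerUnionFin

variable {t : Ordinal → CantorSp} {𝒰 : Set (Set ↥(rangeBelow t frp.ord ∪ CFin))}

theorem exists_infinite_goodCodes_captures (ht : IsUnboundedTower frp t) (h𝒰 : OmegaCover 𝒰) :
    ∃ α < frp.ord, ∀ G : Finset CantorSp, ↑G ⊆ t '' Iio α → ∀ M,
      {d ∈ goodCodes 𝒰 | (∀ x ∈ G, x ∈ Cyl d) ∧
        Captures d ({n | t α n = true} ∪ Iio M)}.Infinite := by
  classical
  have hp := ht.aleph0_lt_frp
  have hlim := Cardinal.isSuccLimit_ord hp.le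
  choose! c hc using fun (G : Finset CantorSp) (hG : ↑G ⊆ rangeBelow t frp.ord ∪ CFin) N =>
    exists_goodCode_captures h𝒰 subset_union_right hG N
  obtain ⟨α, hα, hpos, hesc⟩ := ht.exists_escaping
    (fun β => range fun G : Finset ↥(t '' Iio (Order.succ β)) =>
      gapBound fun N => (c (G.map (.subtype _)) N).1)
    fun β hβ => mk_range_le.trans_lt (mk_finset_lt hp
      ((mk_image_Iio_le t _).trans_lt (Cardinal.lt_ord.1 (hlim.succ_lt hβ))))
  refine ⟨α, hα, fun G hG M => ?_⟩
  obtain ⟨β, hβα, hGβ⟩ := exists_lt_finset_subset_image t hpos hG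
  have hGS : ↑G ⊆ rangeBelow t frp.ord ∪ CFin := by
    refine hG.trans fun x ⟨γ, hγ, hx⟩ => .inl ⟨γ, hγ.trans hα, hx.symm⟩
  refine (infinite_setOf_captures (P := {d ∈ goodCodes 𝒰 | ∀ x ∈ G, x ∈ Cyl d}) (c := c G)
    (fun N => ?_) (ht.1.1 α hα) (hesc β hβα _ ⟨G.subtype (· ∈ _), ?_⟩) M).mono ?_
  · obtain ⟨hd, hNd, hGd, hdN⟩ := hc G hGS N
    exact ⟨⟨hd, hGd⟩, hNd, hdN⟩
  · simp only [Finset.subtype_map_of_mem fun x hx => hGβ hx]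
  · rintro d ⟨⟨hd, hdG⟩, hdM⟩
    exact ⟨hd, hdG, hdM⟩

theorem exists_infinite_almost_subset_goodCodes (ht : IsUnboundedTower frp t) (h𝒰 : OmegaCover 𝒰) :
    ∃ A : Set Code, A.Infinite ∧
      ∀ p ∈ rangeBelow t frp.ord ∪ CFin, (A \ {d ∈ goodCodes 𝒰 | p ∈ Cyl d}).Finite := by
  classical
  have hp := ht.aleph0_lt_frp
  obtain ⟨α, hα, hinf⟩ := exists_infinite_goodCodes_captures ht h𝒰
  let C : ℕ ⊕ ↥(t '' Iio α) → Set Code :=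
    Sum.elim (fun M => {d ∈ goodCodes 𝒰 | Captures d ({n | t α n = true} ∪ Iio M)})
      fun x => {d ∈ goodCodes 𝒰 | x.1 ∈ Cyl d}
  have hC : ∀ F : Finset (ℕ ⊕ ↥(t '' Iio α)), (⋂ i ∈ F, C i).Infinite := fun F => by
    refine (hinf (F.toRight.map (.subtype _)) (by simp) (F.toLeft.sup id)).mono ?_
    rintro d ⟨hd, hdG, hdM⟩
    simp only [Set.mem_iInter]
    rintro (M | x) hi
    · exact ⟨hd, hdM.mono (union_subset_union_right _ (Iio_subset_Iio
        (Finset.le_sup (f := id) (Finset.mem_toLeft.2 hi))))⟩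
    · exact ⟨hd, hdG _ (Finset.mem_map_of_mem _ (Finset.mem_toRight.2 hi))⟩
  obtain ⟨A, hA, hAC⟩ := exists_pseudointersection_of_mk_lt_frp C (by
    simpa using add_lt_of_lt hp.le hp ((mk_image_Iio_le t α).trans_lt (Cardinal.lt_ord.1 hα))) hC
  refine ⟨A, hA, fun p hp => ?_⟩
  rcases ht.1.eq_or_subset_union_Iio α hp with ⟨γ, hγ, rfl⟩ | ⟨M, hM⟩
  · exact (hAC (.inr ⟨t γ, γ, hγ, rfl⟩)).subset (sdiff_subset_sdiff_right fun d hd => hd)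
  · exact (hAC (.inl M)).subset (sdiff_subset_sdiff_right fun d hd => ⟨hd.1, hd.2 p hM⟩)

end TowerUnionFin

/-- For each unbounded `𝔭`-tower `T`, the subspace `T ∪ Fin` of the Cantor
space is an ω-γ set. -/
theorem stmt6 (t : Ordinal → CantorSp) (ht : IsUnboundedTower frp t) :
    OmegaGammaSet ↥(rangeBelow t frp.ord ∪ CFin) := by
  intro 𝒰 h𝒰
  obtain ⟨A, hA, hAp⟩ := exists_infinite_almost_subset_goodCodes ht h𝒰
  obtain ⟨U₀, hU₀, -⟩ := h𝒰.2.2 ∅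
  have : ∀ d : Code, ∃ U ∈ 𝒰, d ∈ goodCodes 𝒰 → Subtype.val ⁻¹' Cyl d ⊆ U := fun d => by
    by_cases hd : d ∈ goodCodes 𝒰
    · obtain ⟨U, hU, hdU⟩ := hd
      exact ⟨U, hU, fun _ => hdU⟩
    · exact ⟨U₀, hU₀, fun h => (hd h).elim⟩
  choose sel hsel𝒰 hsel using this
  refine ⟨sel '' A, image_subset_iff.2 fun d _ => hsel𝒰 d, pointCofiniteCover_image
    (fun d => h𝒰.1 _ (hsel𝒰 d)) (fun d => h𝒰.2.1 _ (hsel𝒰 d)) hA fun p => ?_⟩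
  exact (hAp p p.2).subset fun d ⟨hdA, hpd⟩ => ⟨hdA, fun ⟨hd, hp⟩ => hpd (hsel d hd hp)⟩
end OmissionOfIntervals
end

section
/- If there is an unbounded tower, i.e., a κ-tower for some uncountable cardinal κ that is unbounded with respect to ≤*, then there is an unbounded 𝔟-tower. -/
open Set Filter Cardinal

namespace OmissionOfIntervals

theorem LeStar.of_le {f g : ℕ → ℕ} (h : f ≤ g) : LeStar f g :=
  Eventually.of_forall h

theorem subStar_refl (a : CantorSp) : SubStar a a := by
  simp [SubStar]

theorem UnboundedFam.of_forall_exists_leStar {S T : Set (ℕ → ℕ)} (hS : UnboundedFam S)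
    (hST : ∀ s ∈ S, ∃ t ∈ T, LeStar s t) : UnboundedFam T := by
  rintro ⟨g, hg⟩
  refine hS ⟨g, fun s hs => ?_⟩
  obtain ⟨t, ht, hst⟩ := hST s hs
  exact hst.trans (hg t ht)

theorem unboundedFam_univ : UnboundedFam univ := by
  rintro ⟨g, hg⟩
  obtain ⟨n, hn⟩ := (hg (g + 1) (mem_univ _)).exists
  simp at hn

theorem exists_unboundedFam_mk_eq_frb : ∃ S : Set (ℕ → ℕ), UnboundedFam S ∧ #S = frb := by
  have hne : {c | ∃ S : Set (ℕ → ℕ), UnboundedFam S ∧ #S = c}.Nonempty :=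
    ⟨_, univ, unboundedFam_univ, rfl⟩
  exact csInf_mem hne

theorem exists_leStar_bound_of_mk_lt_frb {S : Set (ℕ → ℕ)} (hS : #S < frb) :
    ∃ g, ∀ s ∈ S, LeStar s g := by
  by_contra hS'
  have hle : frb ≤ #S := csInf_le' ⟨S, hS', rfl⟩
  exact hle.not_gt hS

theorem exists_leStar_bound_of_lt_ord_frb (f : Ordinal.{0} → ℕ → ℕ) {ξ : Ordinal}
    (hξ : ξ < frb.ord) : ∃ g, ∀ η < ξ, LeStar (f η) g := by
  have hcard : #(f '' Iio ξ) < frb := by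
    rw [← lift_lt.{0, 1}]
    calc lift.{1} #(f '' Iio ξ) ≤ lift.{0} #(Iio ξ) := mk_image_le_lift
      _ = lift ξ.card := by simp
      _ < lift frb := lift_lt.2 (lt_ord.1 hξ)
  obtain ⟨g, hg⟩ := exists_leStar_bound_of_mk_lt_frb hcard
  exact ⟨g, fun η hη => hg _ (mem_image_of_mem f hη)⟩

open Classical in
noncomputable def leStarBound (S : Set (ℕ → ℕ)) : ℕ → ℕ :=
  if h : ∃ g, ∀ s ∈ S, LeStar s g then h.choose else 0

theorem leStar_leStarBound {S : Set (ℕ → ℕ)} (h : ∃ g, ∀ s ∈ S, LeStar s g) :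
    ∀ s ∈ S, LeStar s (leStarBound S) := by
  rw [leStarBound, dif_pos h]
  exact h.choose_spec

noncomputable def scale (g : Ordinal → ℕ → ℕ) : Ordinal → ℕ → ℕ :=
  Ordinal.lt_wf.fix fun ξ IH =>
    partialSups (leStarBound (range fun η : Iio ξ => IH η η.2) ⊔ g ξ)

theorem scale_eq (g : Ordinal → ℕ → ℕ) (ξ : Ordinal) :
    scale g ξ = partialSups (leStarBound (scale g '' Iio ξ) ⊔ g ξ) := by
  rw [scale, WellFounded.fix_eq, image_eq_range]

theorem scale_monotone (g : Ordinal → ℕ → ℕ) (ξ : Ordinal) : Monotone (scale g ξ) := by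
  rw [scale_eq]
  exact partialSups_monotone _

theorem le_scale (g : Ordinal → ℕ → ℕ) (ξ : Ordinal) : g ξ ≤ scale g ξ := by
  rw [scale_eq]
  exact le_sup_right.trans (le_partialSups _)

theorem leStar_scale_of_lt {g : Ordinal → ℕ → ℕ} {η ξ : Ordinal} (hηξ : η < ξ)
    (hξ : ∃ b, ∀ ζ < ξ, LeStar (scale g ζ) b) : LeStar (scale g η) (scale g ξ) := by
  have hbdd : ∃ b, ∀ s ∈ scale g '' Iio ξ, LeStar s b := by
    obtain ⟨b, hb⟩ := hξ
    exact ⟨b, by rintro _ ⟨ζ, hζ, rfl⟩; exact hb ζ hζ⟩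
  rw [scale_eq g ξ]
  exact (leStar_leStarBound hbdd _ (mem_image_of_mem _ hηξ)).trans
    (LeStar.of_le (le_sup_left.trans (le_partialSups _)))

theorem exists_monotone_unbounded_leStar_chain :
    ∃ f : Ordinal.{0} → ℕ → ℕ, (∀ ξ, Monotone (f ξ)) ∧
      (∀ η ξ, η < ξ → ξ < frb.ord → LeStar (f η) (f ξ)) ∧
      UnboundedFam {h | ∃ ξ < frb.ord, h = f ξ} := by
  obtain ⟨S, hS, hSc⟩ := exists_unboundedFam_mk_eq_frb
  obtain ⟨e⟩ : Nonempty (Iio frb.ord ≃ S) := lift_mk_eq'.1 (by simp [hSc])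
  let g : Ordinal → ℕ → ℕ := fun ξ => if h : ξ < frb.ord then e ⟨ξ, h⟩ else 0
  refine ⟨scale g, scale_monotone g,
    fun η ξ hηξ hξ => leStar_scale_of_lt hηξ (exists_leStar_bound_of_lt_ord_frb _ hξ),
    hS.of_forall_exists_leStar fun s hs => ?_⟩
  obtain ⟨⟨ξ, hξ⟩, he⟩ := e.surjective ⟨s, hs⟩
  have hgξ : g ξ = s := by simp only [g, dif_pos (mem_Iio.1 hξ), he]
  exact ⟨scale g ξ, ⟨ξ, hξ, rfl⟩, LeStar.of_le (hgξ ▸ le_scale g ξ)⟩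

theorem exists_unboundedTower_of_dominating_chain {κ : Cardinal.{u}} {θ : Cardinal.{v}}
    {t : Ordinal.{u} → CantorSp} (ht : IsUnboundedTower κ t) {f : Ordinal.{v} → ℕ → ℕ}
    (hchain : ∀ η ξ, η < ξ → ξ < θ.ord → LeStar (f η) (f ξ))
    (hdom : ∀ h, ∃ ξ < θ.ord, LeStar h (f ξ)) :
    ∃ t' : Ordinal → CantorSp, IsUnboundedTower θ t' := by
  obtain ⟨⟨htInf, htSub⟩, htUnb⟩ := ht
  set escape : Ordinal.{v} → Set Ordinal.{u} :=
    fun ξ => {α | α < κ.ord ∧ ¬ LeStar (enum (t α)) (f ξ)}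
  have hne : ∀ ξ, (escape ξ).Nonempty := fun ξ => by
    by_contra hempty
    refine htUnb ⟨f ξ, ?_⟩
    rintro _ ⟨α, hα, rfl⟩
    by_contra hesc
    exact hempty ⟨α, hα, hesc⟩
  have hanti : ∀ η ξ, η < ξ → ξ < θ.ord → escape ξ ⊆ escape η :=
    fun η ξ hηξ hξ α ⟨hα, hesc⟩ =>
      ⟨hα, fun hle => hesc (hle.trans (hchain η ξ hηξ hξ))⟩
  refine ⟨fun ξ => t (sInf (escape ξ)),
    ⟨fun ξ _ => htInf _ (csInf_mem (hne ξ)).1, fun η ξ hηξ hξ => ?_⟩, ?_⟩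
  · have hle := csInf_le_csInf (OrderBot.bddBelow _) (hne ξ) (hanti η ξ hηξ hξ)
    rcases hle.eq_or_lt with heq | hlt
    · show SubStar (t (sInf (escape ξ))) (t (sInf (escape η)))
      rw [heq]
      exact subStar_refl _
    · exact htSub _ _ hlt (csInf_mem (hne ξ)).1
  · rintro ⟨G, hG⟩
    obtain ⟨ξ, hξ, hGf⟩ := hdom G
    exact (csInf_mem (hne ξ)).2 ((hG _ ⟨ξ, hξ, rfl⟩).trans hGf)

theorem leStar_comp_of_nth_leStar {f h G : ℕ → ℕ} (hf : Monotone f) (hh : Monotone h)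
    (hinf : {n | f n < h n}.Infinite) (hG : LeStar (Nat.nth fun n => f n < h n) G) :
    LeStar f fun n => h (G (n + 1)) := by
  obtain ⟨N, hN⟩ := eventually_atTop.1 hG
  refine eventually_atTop.2 ⟨N, fun n hn => ?_⟩
  calc f n ≤ f (Nat.nth (fun n => f n < h n) (n + 1)) :=
        hf (n.le_succ.trans (Nat.nth_strictMono hinf).le_apply)
    _ ≤ h (Nat.nth (fun n => f n < h n) (n + 1)) := (Nat.nth_mem_of_infinite hinf _).le
    _ ≤ h (G (n + 1)) := hh (hN _ (hn.trans n.le_succ))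

theorem exists_unboundedTower_of_not_dominating_chain {θ : Cardinal} {f : Ordinal → ℕ → ℕ}
    (hmono : ∀ ξ, Monotone (f ξ))
    (hchain : ∀ η ξ, η < ξ → ξ < θ.ord → LeStar (f η) (f ξ))
    (hunb : UnboundedFam {g | ∃ ξ < θ.ord, g = f ξ})
    (hdom : ¬ ∀ h, ∃ ξ < θ.ord, LeStar h (f ξ)) :
    ∃ t : Ordinal → CantorSp, IsUnboundedTower θ t := by
  push Not at hdom
  obtain ⟨h₀, hh₀⟩ := hdom
  set h : ℕ → ℕ := ⇑(partialSups h₀)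
  have hinf : ∀ ξ < θ.ord, {n | f ξ n < h n}.Infinite := fun ξ hξ => by
    rw [← Nat.frequently_atTop_iff_infinite]
    exact (not_eventually.1 (hh₀ ξ hξ)).mono fun n hn =>
      (not_le.1 hn).trans_le (le_partialSups h₀ n)
  refine ⟨fun ξ n => decide (f ξ n < h n),
    ⟨fun ξ hξ => by simpa [CInf] using hinf ξ hξ, fun η ξ hηξ hξ => ?_⟩, ?_⟩
  · have hev : ∀ᶠ n in cofinite, f η n ≤ f ξ n :=
      Nat.cofinite_eq_atTop ▸ hchain η ξ hηξ hξ
    refine (eventually_cofinite.1 hev).subset fun n hn => ?_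
    simp only [mem_ofPred_eq, decide_eq_true_eq] at hn ⊢
    omega
  · rintro ⟨G, hG⟩
    refine hunb ⟨fun n => h (G (n + 1)), ?_⟩
    rintro _ ⟨ξ, hξ, rfl⟩
    refine leStar_comp_of_nth_leStar (hmono ξ) (partialSups_monotone h₀) (hinf ξ hξ) ?_
    simpa [enum] using hG _ ⟨ξ, hξ, rfl⟩

/-- If there is an unbounded `κ`-tower for some uncountable cardinal `κ`, then
there is an unbounded `𝔟`-tower. -/
theorem stmt7
    (h : ∃ κ : Cardinal, Cardinal.aleph0 < κ ∧
      ∃ t : Ordinal → CantorSp, IsUnboundedTower κ t) :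
    ∃ t : Ordinal → CantorSp, IsUnboundedTower frb t := by
  obtain ⟨κ, -, t, ht⟩ := h
  obtain ⟨f, hmono, hchain, hunb⟩ := exists_monotone_unbounded_leStar_chain
  by_cases hdom : ∀ h, ∃ ξ < frb.ord, LeStar h (f ξ)
  · exact exists_unboundedTower_of_dominating_chain ht hchain hdom
  · exact exists_unboundedTower_of_not_dominating_chain hmono hchain hunb hdom
end OmissionOfIntervals
end

section
/- Let X be a subset of the Cantor space 𝒫(ℕ). Then X is Menger if and only if for every continuous map Φ : X → ℕ^ℕ into the Baire space, the image Φ(X) is not dominating. -/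
open Set Filter Cardinal

namespace OmissionOfIntervals

/-!
If `X` is Menger and `Φ : X → ℕ^ℕ` is continuous, the open covers `{x | Φ x n ≤ k}ₖ` admit finite
selections, i.e. bounds `K n`; selecting separately from every tail of the sequence of covers and
merging, every `Φ x` lies below `K` at infinitely many `n`, so `K + 1` is dominated by no `Φ x`.

Conversely, in a Lindelöf space with a clopen basis every open cover `𝒰ₙ` is refined by a sequence
`(Dₙᵢ)ᵢ` of clopen sets, each inside a member of `𝒰ₙ`. Then `Φ x n := min {i | x ∈ Dₙᵢ}` is
continuous, and a function `f` dominated by no `Φ x` gives for every `x` some `n` with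
`Φ x n < f n`: the members of `𝒰ₙ` containing `Dₙᵢ` for `i < f n` are the finite selections.
-/

open TopologicalSpace Topology

theorem Monotone.exists_sUnion_subset_of_finite {α : Type*} {A : ℕ → Set α} (hA : Monotone A)
    {𝓕 : Set (Set α)} (h𝓕 : 𝓕.Finite) (h𝓕A : 𝓕 ⊆ range A) : ∃ K, ⋃₀ 𝓕 ⊆ A K := by
  choose idx hidx using fun U : 𝓕 => h𝓕A U.2
  have : Finite 𝓕 := h𝓕
  obtain ⟨K, hK⟩ := (finite_range idx).bddAbove
  refine ⟨K, sUnion_subset fun U hU => ?_⟩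
  exact (hidx ⟨U, hU⟩).symm.subset.trans (hA (hK (mem_range_self _)))

section Menger

variable {X : Type*} [TopologicalSpace X]

theorem Menger.exists_frequently_mem (hM : Menger X) {𝒰 : ℕ → Set (Set X)}
    (h𝒰 : ∀ n, IsOpenCover (𝒰 n)) :
    ∃ 𝓕 : ℕ → Set (Set X), (∀ n, 𝓕 n ⊆ 𝒰 n ∧ (𝓕 n).Finite) ∧
      ∀ x, ∃ᶠ n in atTop, x ∈ ⋃₀ 𝓕 n := by
  choose 𝓖 h𝓖 h𝓖cov using fun j => hM (fun m => 𝒰 (m + j)) fun m => h𝒰 (m + j)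
  refine ⟨fun n => ⋃ j ∈ Iic n, 𝓖 j (n - j), fun n => ⟨?_, ?_⟩, fun x => ?_⟩
  · refine iUnion₂_subset fun j hj => ?_
    simpa [Nat.sub_add_cancel (mem_Iic.mp hj)] using (h𝓖 j (n - j)).1
  · exact (finite_Iic n).biUnion fun j _ => (h𝓖 j (n - j)).2
  · refine frequently_atTop.mpr fun j => ?_
    obtain ⟨U, hU, hxU⟩ : x ∈ ⋃₀ ⋃ m, 𝓖 j m := by rw [h𝓖cov j]; trivial
    obtain ⟨m, hm⟩ := mem_iUnion.mp hU
    exact ⟨m + j, Nat.le_add_left j m, U,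
      mem_biUnion (mem_Iic.mpr (Nat.le_add_left j m)) (by simpa using hm), hxU⟩

theorem Menger.not_dominating_range (hM : Menger X) {Φ : X → ℕ → ℕ} (hΦ : Continuous Φ) :
    ¬ Dominating (range Φ) := by
  let A : ℕ → ℕ → Set X := fun n k => (fun x => Φ x n) ⁻¹' Iic k
  have hA : ∀ n, IsOpenCover (range (A n)) := fun n =>
    ⟨by rintro _ ⟨k, rfl⟩; exact (isOpen_discrete _).preimage ((continuous_apply n).comp hΦ),
      eq_univ_of_forall fun x => ⟨A n (Φ x n), mem_range_self _, show Φ x n ≤ Φ x n from le_rfl⟩⟩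
  obtain ⟨𝓕, h𝓕, hfreq⟩ := hM.exists_frequently_mem hA
  have hAmono : ∀ n, Monotone (A n) := fun n _ _ hkl => preimage_mono (Iic_subset_Iic.mpr hkl)
  choose K hK using fun n =>
    Monotone.exists_sUnion_subset_of_finite (hAmono n) (h𝓕 n).2 (h𝓕 n).1
  intro hdom
  obtain ⟨_, ⟨x, rfl⟩, hx⟩ := hdom (K + 1)
  obtain ⟨n, hn, hxn⟩ := (hx.and_frequently (hfreq x)).exists
  have : Φ x n ≤ K n := hK n hxn
  simp only [Pi.add_apply, Pi.one_apply] at hn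
  omega

end Menger

section ZeroDimensional

variable {X : Type*} [TopologicalSpace X]

theorem exists_continuous_mem_of_isClopen {W : ℕ → Set X} (hW : ∀ m, IsClopen (W m))
    (hcov : ∀ x, ∃ m, x ∈ W m) : ∃ φ : X → ℕ, Continuous φ ∧ ∀ x, x ∈ W (φ x) := by
  classical
  refine ⟨fun x => Nat.find (hcov x), continuous_discrete_rng.mpr fun m => ?_,
    fun x => Nat.find_spec (hcov x)⟩
  have : (fun x => Nat.find (hcov x)) ⁻¹' {m} = W m ∩ ⋂ i ∈ Iio m, (W i)ᶜ := by
    ext x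
    simp [Nat.find_eq_iff]
  rw [this]
  exact (hW m).isOpen.inter <| (finite_Iio m).isOpen_biInter fun i _ => (hW i).compl.isOpen

theorem exists_seq_isClopen_covering [LindelofSpace X]
    (hX : IsTopologicalBasis {s : Set X | IsClopen s}) {𝒰 : Set (Set X)} (h𝒰 : IsOpenCover 𝒰) :
    ∃ D : ℕ → Set X, ∃ 𝓖 : ℕ → Set (Set X),
      (∀ i, IsClopen (D i) ∧ 𝓖 i ⊆ 𝒰 ∧ (𝓖 i).Finite ∧ D i ⊆ ⋃₀ 𝓖 i) ∧ ∀ x, ∃ i, x ∈ D i := by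
  have hloc : ∀ x, ∃ C, IsClopen C ∧ x ∈ C ∧ ∃ U ∈ 𝒰, C ⊆ U := fun x => by
    obtain ⟨U, hU, hxU⟩ := mem_sUnion.mp (h𝒰.2.symm ▸ mem_univ x)
    obtain ⟨C, hC, hxC, hCU⟩ := hX.exists_subset_of_mem_open hxU (h𝒰.1 U hU)
    exact ⟨C, hC, hxC, U, hU, hCU⟩
  choose C hC hxC U hU hCU using hloc
  obtain ⟨t, ht, htcov⟩ :=
    LindelofSpace.elim_nhds_subcover C fun x => (hC x).isOpen.mem_nhds (hxC x)
  have : Countable t := ht.to_subtype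
  -- `Option` absorbs the case `t = ∅`, where the sequence is constantly empty.
  obtain ⟨e, he⟩ := exists_surjective_nat (Option t)
  let D : Option t → Set X := fun o => o.elim ∅ fun y => C y
  let 𝓖 : Option t → Set (Set X) := fun o => o.elim ∅ fun y => {U y}
  have hD : ∀ o, IsClopen (D o) ∧ 𝓖 o ⊆ 𝒰 ∧ (𝓖 o).Finite ∧ D o ⊆ ⋃₀ 𝓖 o
    | none => by simp [D, 𝓖, isClopen_empty]
    | some y =>
      ⟨hC y, singleton_subset_iff.mpr (hU y), finite_singleton _, by simpa [D, 𝓖] using hCU y⟩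
  refine ⟨D ∘ e, 𝓖 ∘ e, fun i => hD (e i), fun x => ?_⟩
  obtain ⟨y, hy, hxy⟩ := mem_iUnion₂.mp (htcov.symm ▸ mem_univ x)
  obtain ⟨i, hi⟩ := he (some ⟨y, hy⟩)
  exact ⟨i, by simpa [D, hi] using hxy⟩

theorem isTopologicalBasis_isClopen_of_isInducing {Y : Type*} [TopologicalSpace Y] {f : X → Y}
    (hf : IsInducing f) (hY : IsTopologicalBasis {s : Set Y | IsClopen s}) :
    IsTopologicalBasis {s : Set X | IsClopen s} :=
  (hY.isInducing hf).of_isOpen_of_subset (fun _ hs => hs.isOpen) <| by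
    rintro _ ⟨s, hs, rfl⟩
    exact hs.preimage hf.continuous

theorem menger_of_forall_not_dominating_range [LindelofSpace X]
    (hX : IsTopologicalBasis {s : Set X | IsClopen s})
    (h : ∀ Φ : X → ℕ → ℕ, Continuous Φ → ¬ Dominating (range Φ)) : Menger X := by
  intro 𝒰 h𝒰
  choose D 𝓖 hD hDcov using fun n => exists_seq_isClopen_covering hX (h𝒰 n)
  choose φ hφ hφD using fun n =>
    exists_continuous_mem_of_isClopen (fun i => (hD n i).1) (hDcov n)
  obtain ⟨f, hf⟩ := not_forall.mp (h (fun x n => φ n x) (continuous_pi hφ))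
  refine ⟨fun n => ⋃ i ∈ Iio (f n), 𝓖 n i, fun n => ⟨iUnion₂_subset fun i _ => (hD n i).2.1,
    (finite_Iio _).biUnion fun i _ => (hD n i).2.2.1⟩, eq_univ_of_forall fun x => ?_⟩
  obtain ⟨n, hn⟩ := (not_eventually.mp fun hx => hf ⟨_, ⟨x, rfl⟩, hx⟩).exists
  have hxn : φ n x ∈ Iio (f n) := not_le.mp hn
  exact sUnion_mono (subset_iUnion_of_subset n (subset_biUnion_of_mem hxn))
    ((hD n (φ n x)).2.2.2 (hφD n x))

end ZeroDimensional

/-- A subset `X` of the Cantor space is Menger iff no continuous image of `X`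
in the Baire space is dominating. -/
theorem stmt8 (X : Set CantorSp) :
    Menger ↥X ↔ ∀ Φ : ↥X → (ℕ → ℕ), Continuous Φ → ¬ Dominating (Set.range Φ) :=
  ⟨fun hM _ hΦ => hM.not_dominating_range hΦ,
    menger_of_forall_not_dominating_range <| isTopologicalBasis_isClopen_of_isInducing .subtypeVal
      (isTopologicalBasis_isClopen (X := CantorSp))⟩
end OmissionOfIntervals
end
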